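/- In the group ring F₂[D∞] of the infinite dihedral group D∞ = ⟨t, b | b² = 1, b⁻¹tb = t⁻¹⟩, for each positive integer i and integer j the element e_{ij} = t⁻ⁱ + 1 + tⁱ + t^j(t⁻ⁱ + tⁱ)b is a unit of order 2 (i.e. e_{ij}² = 1 and e_{ij} ≠ 1). -/

import Mathlib

noncomputable section

/-- Relators of the infinite dihedral group `D∞ = ⟨t, b | b² = 1, b⁻¹tb = t⁻¹⟩`,
with `t = 0`, `b = 1`: relators `b²` and `b⁻¹tbt`. -/
def dihedralRels : Set (FreeGroup (Fin 2)) :=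
  {(FreeGroup.of 1) ^ 2,
   (FreeGroup.of 1)⁻¹ * FreeGroup.of 0 * FreeGroup.of 1 * FreeGroup.of 0}

/-- The infinite dihedral group. -/
abbrev Dinf := PresentedGroup dihedralRels

def t : Dinf := PresentedGroup.of 0
def b : Dinf := PresentedGroup.of 1

/-- The group ring `𝔽₂[D∞]`. -/
abbrev FD := MonoidAlgebra (ZMod 2) Dinf

def ι : Dinf →* FD := MonoidAlgebra.of (ZMod 2) Dinf

/-- Mirowicz's unit `e_{ij} = t⁻ⁱ + 1 + tⁱ + t^j(t⁻ⁱ + tⁱ)b`. -/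
def e (i : ℕ) (j : ℤ) : FD :=
  ι (t ^ (-(i : ℤ))) + 1 + ι (t ^ (i : ℤ)) +
    (ι (t ^ j * t ^ (-(i : ℤ))) + ι (t ^ j * t ^ (i : ℤ))) * ι b

lemma mk_rel {r : FreeGroup (Fin 2)} (h : r ∈ dihedralRels) :
    PresentedGroup.mk dihedralRels r = 1 :=
  (QuotientGroup.eq_one_iff r).2 (Subgroup.subset_normalClosure h)

lemma hb2 : b * b = 1 := by
  have := mk_rel (r := (FreeGroup.of 1) ^ 2) (by left; rfl)
  simpa [b, PresentedGroup.of, sq, map_mul] using this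

lemma hbinv : b⁻¹ = b := by rw [inv_eq_iff_mul_eq_one, hb2]

lemma hbtb : b * t * b = t⁻¹ := by
  have := mk_rel (r := (FreeGroup.of 1)⁻¹ * FreeGroup.of 0 * FreeGroup.of 1 * FreeGroup.of 0)
    (by right; rfl)
  simp only [map_mul, map_inv] at this
  have h : b⁻¹ * t * b * t = 1 := this
  rw [hbinv] at h
  exact mul_eq_one_iff_eq_inv.mp h

lemma hconj (k : ℤ) : b * t ^ k * b = t ^ (-k) := by
  calc b * t ^ k * b = (b * t * b⁻¹) ^ k * (b * b) := by
        rw [conj_zpow, hbinv, hb2, mul_one]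
    _ = t ^ (-k) := by rw [hbinv, hbtb, hb2, mul_one, ← zpow_neg_one, ← zpow_mul, neg_one_mul]


local notation "X" => fun (k : ℤ) => ι (t ^ k)
local notation "β" => ι b

lemma char2 (x : FD) : x + x = 0 := by
  have h : (2 : ZMod 2) • x = x + x := two_smul (ZMod 2) x
  rw [← h, show (2 : ZMod 2) = 0 from rfl, zero_smul]

lemma mulX (k m : ℤ) : X k * X m = X (k + m) := by rw [← map_mul, ← zpow_add]
lemma mulX' (k m : ℤ) (y : FD) : X k * (X m * y) = X (k + m) * y := by
  rw [← mul_assoc, mulX]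
lemma X0 : X 0 = 1 := by simp [ι]; exact MonoidAlgebra.one_def.symm
lemma ββ : β * β = 1 := by rw [← map_mul, hb2, map_one]
lemma ββ' (y : FD) : β * (β * y) = y := by rw [← mul_assoc, ββ, one_mul]
lemma βX (k : ℤ) : β * X k = X (-k) * β := by
  rw [← map_mul, ← map_mul, ← hconj k]
  congr 1
  rw [mul_assoc, mul_assoc, hb2, mul_one]
lemma βX' (k : ℤ) (y : FD) : β * (X k * y) = X (-k) * (β * y) := by
  rw [← mul_assoc, βX, mul_assoc]

theorem e_sq (i : ℕ) (j : ℤ) : e i j * e i j = 1 := by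
  have he : e i j = X (-(i:ℤ)) + 1 + X (i:ℤ) + (X (j + -i) + X (j + i)) * β := by
    simp [e, zpow_add, zpow_neg, map_mul]
  rw [he]
  simp only [mul_add, add_mul, mul_one, one_mul, mul_assoc, βX', βX, ββ', ββ, mulX', mulX, mul_one]
  ring_nf
  have h2 : ∀ x : FD, (2:ℕ) • x = 0 := fun x => by rw [two_nsmul, char2]
  abel_nf
  have h2z : ∀ x : FD, (2:ℤ) • x = 0 := fun x => by rw [two_zsmul, char2]
  simp only [show (4:ℤ)=2+2 from rfl, add_zsmul, h2z, add_zero, zero_add]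

def f2 : Fin 2 → Equiv.Perm ℤ := ![Equiv.addRight 1, Equiv.neg ℤ]

lemma negInv : (Equiv.neg ℤ)⁻¹ = Equiv.neg ℤ := by
  ext x; simp [Equiv.Perm.inv_def]

lemma hrel : ∀ r ∈ dihedralRels, FreeGroup.lift f2 r = 1 := by
  intro r hr
  rcases hr with h | h <;> subst h <;>
    · ext x
      simp [f2, sq, negInv, Equiv.Perm.mul_apply]

def φ : Dinf →* Equiv.Perm ℤ := PresentedGroup.toGroup hrel

lemma φt : φ t = Equiv.addRight 1 := by
  have h : φ (PresentedGroup.of 0) = f2 0 := PresentedGroup.toGroup.of hrel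
  rw [t, h]; rfl

lemma φb : φ b = Equiv.neg ℤ := by
  have h : φ (PresentedGroup.of 1) = f2 1 := PresentedGroup.toGroup.of hrel
  rw [b, h]; rfl

lemma φtk (k : ℤ) : φ (t ^ k) = Equiv.addRight k := by
  have hz : ∀ k : ℤ, Equiv.addRight (1 : ℤ) ^ k = Equiv.addRight (k • (1 : ℤ)) := by
    intro k
    induction k using Int.induction_on with
    | zero => ext x; simp
    | succ n ih => rw [zpow_add_one, ih]; ext x; simp [Equiv.Perm.mul_apply]; ring
    | pred n ih => rw [zpow_sub_one, ih]; ext x; simp [Equiv.Perm.mul_apply, Equiv.Perm.inv_def]; ring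
  rw [map_zpow, φt, hz]; norm_num

lemma tpow_inj {a c : ℤ} (h : t ^ a = t ^ c) : a = c := by
  have := congrArg (fun p => p 0) (by rw [congrArg φ h] : φ (t ^ a) = φ (t ^ c))
  simpa [φtk] using this

lemma tpow_ne_mul_b (a c : ℤ) : t ^ a ≠ t ^ c * b := by
  intro h
  have h0 := congrArg (fun p => p 0) (congrArg φ h)
  have h1 := congrArg (fun p => p 1) (congrArg φ h)
  simp [φtk, map_mul, φb, Equiv.Perm.mul_apply] at h0 h1
  omega


lemma e_ne (i : ℕ) (hi : 0 < i) (j : ℤ) : e i j ≠ 1 := by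
  intro h
  have he : e i j = ι (t ^ (-(i:ℤ))) + ι (1 : Dinf) + ι (t ^ (i:ℤ)) +
      ι (t ^ j * t ^ (-(i:ℤ)) * b) + ι (t ^ j * t ^ (i:ℤ) * b) := by
    simp only [e, map_mul, add_mul, map_one]
    abel
  rw [he] at h
  have hc := congrArg (fun x : FD => x.coeff (t ^ (i:ℤ))) h
  have h1 : t ^ (-(i:ℤ)) ≠ t ^ (i:ℤ) := fun hx => by have := tpow_inj hx; omega
  have h2 : (1 : Dinf) ≠ t ^ (i:ℤ) := fun hx => by
    have := tpow_inj (a := 0) (c := (i:ℤ)) (by simpa using hx); omega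
  have h3 : t ^ j * t ^ (-(i:ℤ)) * b ≠ t ^ (i:ℤ) := fun hx => by
    rw [← zpow_add] at hx
    exact tpow_ne_mul_b _ _ hx.symm
  have h4 : t ^ j * t ^ (i:ℤ) * b ≠ t ^ (i:ℤ) := fun hx => by
    rw [← zpow_add] at hx
    exact tpow_ne_mul_b _ _ hx.symm
  classical
  simp only [ι, MonoidAlgebra.of_apply, MonoidAlgebra.one_def] at hc
  simp only [MonoidAlgebra.coeff_add, Finsupp.add_apply, MonoidAlgebra.coeff_single, Finsupp.single_apply] at hc
  rw [if_neg h3, if_neg h4] at hc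
  rw [zpow_neg] at h1
  simp only [zpow_natCast] at h1 h2
  simp [h1, h2] at hc

/-- For every positive integer `i` and integer `j`, the element `e_{ij}` is a
unit of order 2 in `𝔽₂[D∞]`: `e_{ij}² = 1` and `e_{ij} ≠ 1`. -/
theorem e_order_two (i : ℕ) (hi : 0 < i) (j : ℤ) :
    e i j * e i j = 1 ∧ e i j ≠ 1 :=
  ⟨e_sq i j, e_ne i hi j⟩
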